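/- The function P(t) = 1 − ∑_{j=1}^∞ (−1)^{j−1}·2^j·exp(−(2^j − 1)t)·∏_{l=1}^j 1/(2^l − 1) satisfies the integral equation e^{−t}·P(t) = ∫_t^{2t} e^{−u}·P(u) du for all t ≥ 0. -/

import Mathlib

/-- The limiting distribution function
`P(t) = 1 - ∑_{j=1}^∞ (-1)^{j-1} 2^j e^{-(2^j-1)t} ∏_{l=1}^j (2^l-1)⁻¹`
(indices shifted by one here). -/
noncomputable def limP (t : ℝ) : ℝ :=
  1 - ∑' j : ℕ, (-1 : ℝ) ^ j * 2 ^ (j + 1) * Real.exp (-((2 : ℝ) ^ (j + 1) - 1) * t) *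
    ∏ l ∈ Finset.range (j + 1), ((2 : ℝ) ^ (l + 1) - 1)⁻¹

/-! With `C_k = ∏_{l=1}^k (2^l - 1)⁻¹` (so `C_0 = 1`), absorbing `e^{-u}` into the series gives
`e^{-u} P(u) = ∑_{k ≥ 0} (-1)^k 2^k C_k e^{-2^k u}`. For `u ≥ 0` the terms are dominated by the
summable constants `2^k C_k`, so the series may be integrated termwise over `[t, 2t]`, giving
`∑_k (x_k + (2^{k+1} - 1) x_{k+1})` with `x_k = (-1)^k C_k e^{-2^k t}`, because
`(2^{k+1} - 1) C_{k+1} = C_k`. Regrouping, this is `∑_k 2^k x_k = e^{-t} P(t)`. -/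

open Real Finset Filter

theorem integral_mul_exp_neg_mul (c a b : ℝ) :
    ∫ u in a..b, c * exp (-(c * u)) = exp (-(c * a)) - exp (-(c * b)) := by
  rw [intervalIntegral.integral_const_mul,
    intervalIntegral.mul_integral_comp_mul_left (f := fun x => exp (-x)),
    intervalIntegral.integral_comp_neg, integral_exp]

theorem hasSum_add_sub_one_mul_succ {x m : ℕ → ℝ} {s : ℝ} (hx : Summable x)
    (hmx : HasSum (fun k => m k * x k) s) (hm : m 0 = 1) :
    HasSum (fun k => x k + (m (k + 1) - 1) * x (k + 1)) s := by
  have hmx' := (hasSum_nat_add_iff' 1).mpr hmx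
  have hx' := (hasSum_nat_add_iff' 1).mpr hx.hasSum
  have h := (hx.hasSum.add hmx').sub hx'
  rw [sum_range_one, sum_range_one, hm, one_mul, add_sub_assoc, sub_sub_sub_cancel_right,
    add_sub_cancel] at h
  have hfun : (fun k => x k + (m (k + 1) - 1) * x (k + 1)) =
      fun k => x k + m (k + 1) * x (k + 1) - x (k + 1) := funext fun k => by ring
  rwa [hfun]

noncomputable def limPCoeff (k : ℕ) : ℝ := ∏ l ∈ range k, ((2 : ℝ) ^ (l + 1) - 1)⁻¹

theorem two_pow_succ_sub_one_pos (k : ℕ) : 0 < (2 : ℝ) ^ (k + 1) - 1 := by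
  have : (2 : ℝ) ≤ 2 ^ (k + 1) := le_self_pow₀ one_le_two k.succ_ne_zero
  linarith

theorem limPCoeff_nonneg (k : ℕ) : 0 ≤ limPCoeff k :=
  prod_nonneg fun l _ => (inv_pos.mpr (two_pow_succ_sub_one_pos l)).le

theorem limPCoeff_succ (k : ℕ) : limPCoeff (k + 1) = limPCoeff k * ((2 : ℝ) ^ (k + 1) - 1)⁻¹ :=
  prod_range_succ _ k

theorem mul_limPCoeff_succ (k : ℕ) :
    ((2 : ℝ) ^ (k + 1) - 1) * limPCoeff (k + 1) = limPCoeff k := by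
  rw [limPCoeff_succ, mul_left_comm, mul_inv_cancel₀ (two_pow_succ_sub_one_pos k).ne', mul_one]

theorem summable_two_pow_mul_limPCoeff : Summable fun k => (2 : ℝ) ^ k * limPCoeff k := by
  refine summable_of_ratio_norm_eventually_le (r := 2 / 3) (by norm_num) ?_
  filter_upwards [eventually_ge_atTop 1] with k hk
  have h4 : (4 : ℝ) ≤ 2 ^ (k + 1) := by
    calc (4 : ℝ) = 2 ^ 2 := by norm_num
      _ ≤ 2 ^ (k + 1) := pow_le_pow_right₀ one_le_two (by omega)
  have hinv : ((2 : ℝ) ^ (k + 1) - 1)⁻¹ ≤ 3⁻¹ := inv_anti₀ (by norm_num) (by linarith)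
  have hc : 0 ≤ (2 : ℝ) ^ k * limPCoeff k := mul_nonneg (by positivity) (limPCoeff_nonneg k)
  rw [norm_of_nonneg (mul_nonneg (by positivity) (limPCoeff_nonneg _)), norm_of_nonneg hc]
  calc (2 : ℝ) ^ (k + 1) * limPCoeff (k + 1)
      = 2 * ((2 : ℝ) ^ k * limPCoeff k) * ((2 : ℝ) ^ (k + 1) - 1)⁻¹ := by
        rw [limPCoeff_succ, pow_succ]; ring
    _ ≤ 2 * ((2 : ℝ) ^ k * limPCoeff k) * 3⁻¹ := by gcongr
    _ = 2 / 3 * ((2 : ℝ) ^ k * limPCoeff k) := by ring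

noncomputable def limPTerm (k : ℕ) (u : ℝ) : ℝ :=
  (-1) ^ k * limPCoeff k * (2 ^ k * exp (-(2 ^ k * u)))

theorem limPTerm_zero (u : ℝ) : limPTerm 0 u = exp (-u) := by
  simp [limPTerm, limPCoeff]

theorem norm_limPTerm_le (k : ℕ) {u : ℝ} (hu : 0 ≤ u) :
    ‖limPTerm k u‖ ≤ 2 ^ k * limPCoeff k := by
  have hexp : exp (-(2 ^ k * u)) ≤ 1 := exp_le_one_iff.mpr (by simp only [neg_nonpos]; positivity)
  rw [limPTerm, norm_mul, norm_mul, norm_pow, norm_neg, norm_one, one_pow, one_mul,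
    norm_of_nonneg (limPCoeff_nonneg k), norm_of_nonneg (by positivity)]
  calc limPCoeff k * (2 ^ k * exp (-(2 ^ k * u))) ≤ limPCoeff k * (2 ^ k * 1) := by
        gcongr; exact limPCoeff_nonneg k
    _ = 2 ^ k * limPCoeff k := by ring

theorem summable_limPTerm {u : ℝ} (hu : 0 ≤ u) : Summable fun k => limPTerm k u :=
  summable_two_pow_mul_limPCoeff.of_norm_bounded fun k => norm_limPTerm_le k hu

theorem hasSum_limPTerm {u : ℝ} (hu : 0 ≤ u) :
    HasSum (fun k => limPTerm k u) (exp (-u) * limP u) := by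
  have hshift : ∀ j : ℕ, limPTerm (j + 1) u = -exp (-u) * ((-1 : ℝ) ^ j * 2 ^ (j + 1) *
      exp (-((2 : ℝ) ^ (j + 1) - 1) * u) * ∏ l ∈ range (j + 1), ((2 : ℝ) ^ (l + 1) - 1)⁻¹) := by
    intro j
    have hexp : exp (-(2 ^ (j + 1) * u)) = exp (-u) * exp (-((2 : ℝ) ^ (j + 1) - 1) * u) := by
      rw [← exp_add]; ring_nf
    rw [limPTerm, limPCoeff, hexp]
    ring
  have hs : Summable fun k => limPTerm (k + 1) u :=
    (summable_nat_add_iff 1).mpr (summable_limPTerm hu)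
  have h := HasSum.zero_add (f := fun k => limPTerm k u) hs.hasSum
  simp only [hshift, tsum_mul_left] at h
  convert h using 1
  rw [limPTerm_zero, limP]
  ring

theorem integral_limPTerm (k : ℕ) (a b : ℝ) :
    ∫ u in a..b, limPTerm k u =
      (-1) ^ k * limPCoeff k * (exp (-(2 ^ k * a)) - exp (-(2 ^ k * b))) := by
  simp only [limPTerm]
  rw [intervalIntegral.integral_const_mul, integral_mul_exp_neg_mul]

theorem hasSum_integral_limPTerm {a b : ℝ} (ha : 0 ≤ a) (hb : 0 ≤ b) :
    HasSum (fun k => ∫ u in a..b, limPTerm k u) (∫ u in a..b, exp (-u) * limP u) := by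
  have hnonneg : ∀ u ∈ Set.uIoc a b, 0 ≤ u := fun u hu =>
    (le_min ha hb).trans (Set.uIoc_subset_uIcc hu).1
  refine intervalIntegral.hasSum_integral_of_dominated_convergence
    (fun k _ => 2 ^ k * limPCoeff k) (fun k => ?_) (fun k => ?_) ?_ ?_ ?_
  · exact (by unfold limPTerm; fun_prop : Continuous (limPTerm k)).aestronglyMeasurable
  · exact .of_forall fun u hu => norm_limPTerm_le k (hnonneg u hu)
  · exact .of_forall fun _ _ => summable_two_pow_mul_limPCoeff
  · exact intervalIntegrable_const
  · exact .of_forall fun u hu => hasSum_limPTerm (hnonneg u hu)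

theorem limP_integral_equation :
    ∀ t : ℝ, 0 ≤ t →
      Real.exp (-t) * limP t = ∫ u in t..(2 * t), Real.exp (-u) * limP u := by
  intro t ht
  set x : ℕ → ℝ := fun k => (-1) ^ k * limPCoeff k * exp (-(2 ^ k * t))
  have hterm : HasSum (fun k => (2 : ℝ) ^ k * x k) (exp (-t) * limP t) := by
    convert hasSum_limPTerm ht using 2 with k
    simp only [x, limPTerm]
    ring
  have hx : Summable x := hterm.summable.norm.of_norm_bounded fun k =>
    calc ‖x k‖ ≤ ‖(2 : ℝ) ^ k‖ * ‖x k‖ := le_mul_of_one_le_left (norm_nonneg _)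
          (by rw [norm_pow, Real.norm_two]; exact one_le_pow₀ one_le_two)
      _ = ‖2 ^ k * x k‖ := (norm_mul _ _).symm
  have hint : HasSum (fun k => x k + ((2 : ℝ) ^ (k + 1) - 1) * x (k + 1))
      (∫ u in t..(2 * t), exp (-u) * limP u) := by
    convert hasSum_integral_limPTerm ht (by linarith : 0 ≤ 2 * t) using 2 with k
    rw [integral_limPTerm]
    have h2 : (2 : ℝ) ^ k * (2 * t) = 2 ^ (k + 1) * t := by ring
    simp only [x]
    rw [h2, ← mul_limPCoeff_succ]
    ring
  exact (hasSum_add_sub_one_mul_succ hx hterm (pow_zero 2)).unique hint
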